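/- arXiv:2110.12203 — 3 statements merged into one kernel-verified Lean document; each statement's English description precedes it below -/
import Mathlib

section
/- If (X,Y) is distributed according to the Archimedean law, then for every t ∈ [0,1] the random variable A_t = X cos(πt) + Y sin(πt) is uniformly distributed on [-1,1]. -/
/-!
The Archimedean density depends only on `x² + y²` and rotations preserve Lebesgue measure, so the
law is rotation invariant and `A_t`, the first coordinate of a rotated point, has the law of `X`.
For `|x| < 1` the density of `X` is `∫ dy / (2π √(r² - y²))` over `|y| < r = √(1 - x²)`, which is
`1/2` by the substitution `y = r sin θ`.
-/

open MeasureTheory Real Set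
open scoped ENNReal

noncomputable def archMeasure : Measure (ℝ × ℝ) :=
  volume.withDensity (fun p =>
    if p.1 ^ 2 + p.2 ^ 2 < 1 then
      ENNReal.ofReal (1 / (2 * π * Real.sqrt (1 - p.1 ^ 2 - p.2 ^ 2)))
    else 0)

theorem lintegral_Ioo_inv_sqrt_sq_sub_sq {r : ℝ} (hr : 0 < r) :
    ∫⁻ y in Ioo (-r) r, ENNReal.ofReal (√(r ^ 2 - y ^ 2))⁻¹ = ENNReal.ofReal π := by
  have hmono : StrictMonoOn (fun θ => r * sin θ) (Icc (-(π / 2)) (π / 2)) :=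
    fun a ha b hb hab => mul_lt_mul_of_pos_left (strictMonoOn_sin ha hb hab) hr
  have himage : (fun θ => r * sin θ) '' Ioo (-(π / 2)) (π / 2) = Ioo (-r) r := by
    rw [ContinuousOn.image_Ioo_of_strictMonoOn (by linarith [pi_pos]) (by fun_prop) hmono]
    simp
  have hjacobian : ∀ θ ∈ Ioo (-(π / 2)) (π / 2),
      ENNReal.ofReal |r * cos θ| * ENNReal.ofReal (√(r ^ 2 - (r * sin θ) ^ 2))⁻¹ = 1 := by
    intro θ hθ
    have hrc : 0 < r * cos θ := mul_pos hr (cos_pos_of_mem_Ioo hθ)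
    have hsq : r ^ 2 - (r * sin θ) ^ 2 = (r * cos θ) ^ 2 := by
      linear_combination -r ^ 2 * cos_sq_add_sin_sq θ
    rw [hsq, sqrt_sq hrc.le, abs_of_pos hrc, ← ENNReal.ofReal_mul hrc.le,
      mul_inv_cancel₀ hrc.ne', ENNReal.ofReal_one]
  rw [← himage, lintegral_image_eq_lintegral_abs_deriv_mul measurableSet_Ioo
      (fun θ _ => ((hasDerivAt_sin θ).const_mul r).hasDerivWithinAt)
      (hmono.injOn.mono Ioo_subset_Icc_self),
    setLIntegral_congr_fun measurableSet_Ioo hjacobian, setLIntegral_one, volume_Ioo]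
  ring_nf

theorem map_withDensity_of_measurePreserving {α : Type*} [MeasurableSpace α] {μ : Measure α}
    {f : α → α} (hf : MeasurePreserving f μ μ) {g : α → ℝ≥0∞} (hg : Measurable g)
    (hgf : ∀ x, g (f x) = g x) : (μ.withDensity g).map f = μ.withDensity g := by
  ext s hs
  rw [Measure.map_apply hf.measurable hs, withDensity_apply _ (hf.measurable hs),
    withDensity_apply _ hs, ← hf.setLIntegral_comp_preimage hs hg]
  simp only [hgf]

theorem map_fst_withDensity_prod {α β : Type*} [MeasurableSpace α] [MeasurableSpace β]
    {μ : Measure α} {ν : Measure β} [SFinite μ] [SFinite ν] {f : α × β → ℝ≥0∞}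
    (hf : Measurable f) :
    ((μ.prod ν).withDensity f).map Prod.fst = μ.withDensity (fun x => ∫⁻ y, f (x, y) ∂ν) := by
  ext s hs
  rw [Measure.map_apply measurable_fst hs, withDensity_apply _ (measurable_fst hs),
    withDensity_apply _ hs, ← prod_univ, ← Measure.prod_restrict, Measure.restrict_univ,
    lintegral_prod _ hf.aemeasurable]

noncomputable def planeRotation (θ : ℝ) : ℝ × ℝ →ₗ[ℝ] ℝ × ℝ :=
  Matrix.toLin (Module.Basis.finTwoProd ℝ) (Module.Basis.finTwoProd ℝ)
    !![cos θ, sin θ; -sin θ, cos θ]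

theorem planeRotation_apply (θ : ℝ) (p : ℝ × ℝ) :
    planeRotation θ p = (cos θ * p.1 + sin θ * p.2, -sin θ * p.1 + cos θ * p.2) :=
  Matrix.toLin_finTwoProd_apply _ _ _ _ p

theorem normSq_planeRotation (θ : ℝ) (p : ℝ × ℝ) :
    (planeRotation θ p).1 ^ 2 + (planeRotation θ p).2 ^ 2 = p.1 ^ 2 + p.2 ^ 2 := by
  rw [planeRotation_apply]
  linear_combination (p.1 ^ 2 + p.2 ^ 2) * cos_sq_add_sin_sq θ

theorem measurePreserving_planeRotation (θ : ℝ) :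
    MeasurePreserving (planeRotation θ) volume volume := by
  have hdet : LinearMap.det (planeRotation θ) = 1 := by
    rw [planeRotation, LinearMap.det_toLin, Matrix.det_fin_two_of]
    linear_combination cos_sq_add_sin_sq θ
  refine ⟨(planeRotation θ).continuous_of_finiteDimensional.measurable, ?_⟩
  rw [Measure.map_linearMap_addHaar_eq_smul_addHaar volume (by simp [hdet]), hdet]
  simp

theorem map_planeRotation_withDensity_radial (θ : ℝ) {g : ℝ → ℝ≥0∞} (hg : Measurable g) :
    (volume.withDensity fun p : ℝ × ℝ => g (p.1 ^ 2 + p.2 ^ 2)).map (planeRotation θ) =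
      volume.withDensity fun p : ℝ × ℝ => g (p.1 ^ 2 + p.2 ^ 2) :=
  map_withDensity_of_measurePreserving (measurePreserving_planeRotation θ) (by fun_prop)
    fun p => by rw [normSq_planeRotation]

noncomputable def archRadialDensity (ρ : ℝ) : ℝ≥0∞ :=
  if ρ < 1 then ENNReal.ofReal (1 / (2 * π * √(1 - ρ))) else 0

theorem measurable_archRadialDensity : Measurable archRadialDensity :=
  Measurable.ite measurableSet_Iio (by fun_prop) measurable_const

theorem archMeasure_eq_withDensity_radial :
    archMeasure = volume.withDensity fun p : ℝ × ℝ => archRadialDensity (p.1 ^ 2 + p.2 ^ 2) := by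
  simp only [archMeasure, archRadialDensity, sub_sub]

theorem lintegral_archRadialDensity_slice (x : ℝ) :
    ∫⁻ y, archRadialDensity (x ^ 2 + y ^ 2) =
      (Ioo (-1) 1).indicator (fun _ => ENNReal.ofReal (1 / 2)) x := by
  have hx_mem : x ∈ Ioo (-1) 1 ↔ x ^ 2 < 1 := by
    rw [mem_Ioo, ← abs_lt, sq_lt_one_iff_abs_lt_one]
  by_cases hx2 : x ^ 2 < 1
  · set r := √(1 - x ^ 2)
    have hr : 0 < r := sqrt_pos.2 (by linarith)
    have hr2 : r ^ 2 = 1 - x ^ 2 := sq_sqrt (by linarith)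
    have hslice : (fun y => archRadialDensity (x ^ 2 + y ^ 2)) = (Ioo (-r) r).indicator
        fun y => ENNReal.ofReal (1 / (2 * π)) * ENNReal.ofReal (√(r ^ 2 - y ^ 2))⁻¹ := by
      ext y
      have hmem : x ^ 2 + y ^ 2 < 1 ↔ y ∈ Ioo (-r) r := by
        rw [mem_Ioo, ← abs_lt, lt_sqrt (abs_nonneg y), sq_abs]
        constructor <;> intro h <;> linarith
      by_cases hy : y ∈ Ioo (-r) r
      · rw [indicator_of_mem hy, archRadialDensity, if_pos (hmem.2 hy),
          ← ENNReal.ofReal_mul (by positivity), hr2]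
        congr 1
        simp only [sub_sub, one_div, mul_inv]
      · rw [indicator_of_notMem hy, archRadialDensity, if_neg (mt hmem.1 hy)]
    rw [hslice, lintegral_indicator measurableSet_Ioo,
      lintegral_const_mul' _ _ ENNReal.ofReal_ne_top, lintegral_Ioo_inv_sqrt_sq_sub_sq hr,
      ← ENNReal.ofReal_mul (by positivity), indicator_of_mem (hx_mem.2 hx2)]
    congr 1
    field_simp
  · have hdisk : ∀ y, ¬ x ^ 2 + y ^ 2 < 1 := fun y h => hx2 (by nlinarith [sq_nonneg y])
    simp [archRadialDensity, hdisk, indicator_of_notMem (mt hx_mem.1 hx2)]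

theorem map_planeRotation_archMeasure (θ : ℝ) :
    archMeasure.map (planeRotation θ) = archMeasure := by
  rw [archMeasure_eq_withDensity_radial,
    map_planeRotation_withDensity_radial θ measurable_archRadialDensity]

theorem map_fst_archMeasure :
    archMeasure.map Prod.fst = ENNReal.ofReal (1 / 2) • volume.restrict (Icc (-1 : ℝ) 1) := by
  rw [archMeasure_eq_withDensity_radial, Measure.volume_eq_prod,
    map_fst_withDensity_prod (f := fun p => archRadialDensity (p.1 ^ 2 + p.2 ^ 2))
      (measurable_archRadialDensity.comp (by fun_prop))]
  simp only [lintegral_archRadialDensity_slice]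
  rw [withDensity_indicator measurableSet_Ioo, withDensity_const,
    Measure.restrict_congr_set Ioo_ae_eq_Icc]

theorem sineCurve_marginal_uniform_general (t : ℝ) :
    Measure.map (fun p : ℝ × ℝ => p.1 * Real.cos (π * t) + p.2 * Real.sin (π * t))
      archMeasure = ENNReal.ofReal (1 / 2) • volume.restrict (Icc (-1 : ℝ) 1) := by
  have hA : (fun p : ℝ × ℝ => p.1 * cos (π * t) + p.2 * sin (π * t)) =
      Prod.fst ∘ planeRotation (π * t) := by
    ext p
    rw [Function.comp_apply, planeRotation_apply]
    ring
  rw [hA, ← Measure.map_map measurable_fst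
      (planeRotation (π * t)).continuous_of_finiteDimensional.measurable,
    map_planeRotation_archMeasure, map_fst_archMeasure]

/-- If `(X,Y)` is Archimedean-distributed, then for every `t ∈ [0,1]` the random
variable `A_t = X cos(πt) + Y sin(πt)` is uniformly distributed on `[-1,1]`. -/
theorem sineCurve_marginal_uniform (t : ℝ) (ht : t ∈ Icc (0 : ℝ) 1) :
    Measure.map (fun p : ℝ × ℝ => p.1 * Real.cos (π * t) + p.2 * Real.sin (π * t))
      archMeasure = ENNReal.ofReal (1 / 2) • volume.restrict (Icc (-1 : ℝ) 1) :=
  sineCurve_marginal_uniform_general t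
end

section
/- If a sequence of empirical measures of permutations μ_{σ_N} converges weakly to a measure μ on [0,1]², then μ has uniform marginals, i.e. μ is a permuton. -/
open MeasureTheory Set Filter Topology BoundedContinuousFunction ENNReal

/-- The empirical measure of a permutation `σ ∈ S_N`:
`μ_σ = (1/N)∑_{i=1}^N δ_{(i/N, σ(i)/N)}`. -/
noncomputable def empMeasure (N : ℕ) (σ : Equiv.Perm (Fin N)) : Measure (ℝ × ℝ) :=
  (N : ℝ≥0∞)⁻¹ • ∑ i : Fin N,
    Measure.dirac ((((i : ℕ) + 1 : ℝ) / N, (((σ i : ℕ) + 1 : ℝ) / N)))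

/-!
Against `μ_σ`, a function of the first coordinate integrates to the right-endpoint Riemann sum
`(1/N) ∑ f (i/N)`, and so does a function of the second coordinate, after reindexing the sum by
`σ`. For continuous `f` these sums are integrals of step functions converging boundedly to `f` on
`[0,1]`, hence tend to `∫₀¹ f`. So each marginal of `μ` integrates every bounded continuous
function as Lebesgue measure on `[0,1]` does, and finite Borel measures on `ℝ` are determined by
such integrals.
-/

lemma ceil_mul_eq_of_mem_Ioc {N k : ℕ} (hN : 0 < N) {x : ℝ}
    (hx : x ∈ Ioc ((k : ℝ) / N) ((k + 1) / N)) : ⌈(N : ℝ) * x⌉ = k + 1 := by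
  have hNR : (0 : ℝ) < N := by exact_mod_cast hN
  rw [mem_Ioc, div_lt_iff₀' hNR, le_div_iff₀' hNR] at hx
  rw [Int.ceil_eq_iff]
  push_cast
  constructor <;> linarith [hx.1, hx.2]

lemma ceil_mul_div_mem_Icc (N : ℕ) {x : ℝ} (hx : x ∈ Icc (0 : ℝ) 1) :
    (⌈(N : ℝ) * x⌉ : ℝ) / N ∈ Icc (0 : ℝ) 1 := by
  have hceil_nonneg : (0 : ℝ) ≤ ⌈(N : ℝ) * x⌉ := by
    exact_mod_cast Int.ceil_nonneg (mul_nonneg N.cast_nonneg hx.1)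
  have hceil_le : (⌈(N : ℝ) * x⌉ : ℝ) ≤ N := by
    exact_mod_cast Int.ceil_le.2 (by simpa using mul_le_of_le_one_right N.cast_nonneg hx.2)
  exact ⟨div_nonneg hceil_nonneg N.cast_nonneg, div_le_one_of_le₀ hceil_le N.cast_nonneg⟩

lemma tendsto_ceil_mul_div (x : ℝ) :
    Tendsto (fun N : ℕ => (⌈(N : ℝ) * x⌉ : ℝ) / N) atTop (𝓝 x) := by
  have hupper : Tendsto (fun N : ℕ => x + 1 / (N : ℝ)) atTop (𝓝 x) := by
    simpa using tendsto_const_nhds.add (tendsto_one_div_atTop_nhds_zero_nat (𝕜 := ℝ))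
  refine tendsto_of_tendsto_of_tendsto_of_le_of_le' tendsto_const_nhds hupper ?_ ?_ <;>
    filter_upwards [eventually_gt_atTop 0] with N hN
  · rw [le_div_iff₀' (Nat.cast_pos.2 hN)]
    exact Int.le_ceil _
  · have hNR : (0 : ℝ) < N := Nat.cast_pos.2 hN
    rw [div_le_iff₀' hNR, mul_add, mul_one_div_cancel hNR.ne']
    exact (Int.ceil_lt_add_one _).le

section

variable {E : Type*} [NormedAddCommGroup E] [NormedSpace ℝ E]

noncomputable def riemannSum (N : ℕ) (f : ℝ → E) : E :=
  (N : ℝ)⁻¹ • ∑ i : Fin N, f (((i : ℕ) + 1 : ℝ) / N)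

variable [CompleteSpace E]

lemma integral_Icc_ceil_step_eq_riemannSum (f : ℝ → E) {N : ℕ} (hN : 0 < N) :
    ∫ x in Icc (0 : ℝ) 1, f (⌈(N : ℝ) * x⌉ / N) = riemannSum N f := by
  have hNR : (0 : ℝ) < N := by exact_mod_cast hN
  set step : ℝ → E := fun x => f (⌈(N : ℝ) * x⌉ / N)
  have hstep : ∀ k : ℕ, EqOn step (fun _ => f (((k : ℝ) + 1) / N))
      (Ioc ((k : ℝ) / N) ((k + 1) / N)) := fun k x hx => by
    simp [step, ceil_mul_eq_of_mem_Ioc hN hx]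
  have hle : ∀ k : ℕ, (k : ℝ) / N ≤ (k + 1) / N := fun k => by gcongr; linarith
  have hpiece : ∀ k : ℕ, ∫ x in (k : ℝ) / N..(k + 1) / N, step x
      = (N : ℝ)⁻¹ • f (((k : ℝ) + 1) / N) := fun k => by
    rw [intervalIntegral.integral_of_le (hle k), setIntegral_congr_fun measurableSet_Ioc (hstep k),
      setIntegral_const, measureReal_def, Real.volume_Ioc, ← sub_div, add_sub_cancel_left,
      ENNReal.toReal_ofReal (by positivity), one_div]
  have hint : ∀ k : ℕ, IntervalIntegrable step volume ((k : ℝ) / N) ((k + 1) / N) := fun k => by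
    rw [intervalIntegrable_iff_integrableOn_Ioc_of_le (hle k)]
    exact (integrableOn_const measure_Ioc_lt_top.ne).congr_fun (hstep k).symm measurableSet_Ioc
  have hsum := intervalIntegral.sum_integral_adjacent_intervals (f := step) (μ := volume)
    (a := fun k : ℕ => (k : ℝ) / N) (n := N) (fun k _ => by simpa using hint k)
  simp only [Nat.cast_add, Nat.cast_one, CharP.cast_eq_zero, zero_div, div_self hNR.ne'] at hsum
  rw [integral_Icc_eq_integral_Ioc, ← intervalIntegral.integral_of_le zero_le_one, ← hsum,
    riemannSum, Fin.sum_univ_eq_sum_range (fun k : ℕ => f (((k : ℝ) + 1) / N)), Finset.smul_sum]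
  exact Finset.sum_congr rfl fun k _ => hpiece k

lemma tendsto_riemannSum {f : ℝ → E} (hf : Continuous f) :
    Tendsto (fun N => riemannSum N f) atTop (𝓝 (∫ x in Icc (0 : ℝ) 1, f x)) := by
  obtain ⟨C, hC⟩ := isCompact_Icc.exists_bound_of_continuousOn hf.continuousOn
  have hstep : Tendsto (fun N : ℕ => ∫ x in Icc (0 : ℝ) 1, f (⌈(N : ℝ) * x⌉ / N)) atTop
      (𝓝 (∫ x in Icc (0 : ℝ) 1, f x)) := by
    refine tendsto_integral_of_dominated_convergence (fun _ => C) (fun N => ?_)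
      (integrable_const C) (fun N => ?_) (ae_of_all _ fun x => ?_)
    · exact hf.comp_aestronglyMeasurable
        ((measurable_from_top (f := fun z : ℤ => (z : ℝ) / N)).comp
          (measurable_const.mul measurable_id).ceil).aestronglyMeasurable
    · filter_upwards [ae_restrict_mem measurableSet_Icc] with x hx
      exact hC _ (ceil_mul_div_mem_Icc N hx)
    · exact (hf.tendsto x).comp (tendsto_ceil_mul_div x)
  refine hstep.congr' ?_
  filter_upwards [eventually_gt_atTop 0] with N hN
  exact integral_Icc_ceil_step_eq_riemannSum f hN

lemma eq_volume_Icc_of_tendsto_riemannSum {ν : Measure ℝ} [IsFiniteMeasure ν]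
    (h : ∀ f : ℝ →ᵇ ℝ, Tendsto (fun N => riemannSum N f) atTop (𝓝 (∫ x, f x ∂ν))) :
    ν = volume.restrict (Icc 0 1) :=
  ext_of_forall_integral_eq_of_IsFiniteMeasure fun f =>
    tendsto_nhds_unique (h f) (tendsto_riemannSum f.continuous)

lemma integral_empMeasure (N : ℕ) (τ : Equiv.Perm (Fin N)) (g : ℝ × ℝ → E) :
    ∫ p, g p ∂(empMeasure N τ)
      = (N : ℝ)⁻¹ • ∑ i : Fin N, g ((((i : ℕ) + 1 : ℝ)) / N, (((τ i : ℕ) + 1 : ℝ)) / N) := by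
  rw [empMeasure, integral_smul_measure,
    integral_finsetSum_measure fun i _ => integrable_dirac enorm_lt_top]
  simp [integral_dirac]

lemma integral_comp_fst_empMeasure (N : ℕ) (τ : Equiv.Perm (Fin N)) (f : ℝ → E) :
    ∫ p, f p.1 ∂(empMeasure N τ) = riemannSum N f :=
  integral_empMeasure N τ _

lemma integral_comp_snd_empMeasure (N : ℕ) (τ : Equiv.Perm (Fin N)) (f : ℝ → E) :
    ∫ p, f p.2 ∂(empMeasure N τ) = riemannSum N f := by
  rw [integral_empMeasure, riemannSum, Equiv.sum_comp τ fun j => f (((j : ℕ) + 1 : ℝ) / N)]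

end

lemma map_eq_volume_Icc_of_integral_empMeasure {σ : ∀ N : ℕ, Equiv.Perm (Fin N)}
    {μ : Measure (ℝ × ℝ)} [IsFiniteMeasure μ]
    (hconv : ∀ f : (ℝ × ℝ) →ᵇ ℝ,
      Tendsto (fun N => ∫ p, f p ∂(empMeasure N (σ N))) atTop (𝓝 (∫ p, f p ∂μ)))
    {π : ℝ × ℝ → ℝ} (hπ : Continuous π)
    (hπ_emp : ∀ N (f : ℝ → ℝ), ∫ p, f (π p) ∂(empMeasure N (σ N)) = riemannSum N f) :
    μ.map π = volume.restrict (Icc 0 1) := by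
  refine eq_volume_Icc_of_tendsto_riemannSum fun f => ?_
  rw [integral_map hπ.aemeasurable f.continuous.aestronglyMeasurable]
  exact (hconv (f.compContinuous ⟨π, hπ⟩)).congr fun N => hπ_emp N f

/-- If empirical measures of permutations converge weakly to a probability
measure `μ` on `[0,1]²`, then `μ` has uniform marginals, i.e. `μ` is a permuton. -/
theorem limit_of_empirical_is_permuton (σ : ∀ N : ℕ, Equiv.Perm (Fin N))
    (μ : Measure (ℝ × ℝ)) [IsProbabilityMeasure μ]
    (hconv : ∀ f : (ℝ × ℝ) →ᵇ ℝ,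
      Tendsto (fun N => ∫ p, f p ∂(empMeasure N (σ N))) atTop (𝓝 (∫ p, f p ∂μ))) :
    μ.map Prod.fst = volume.restrict (Icc (0 : ℝ) 1) ∧
    μ.map Prod.snd = volume.restrict (Icc (0 : ℝ) 1) :=
  ⟨map_eq_volume_Icc_of_integral_empMeasure hconv continuous_fst
      fun N => integral_comp_fst_empMeasure N (σ N),
    map_eq_volume_Icc_of_integral_empMeasure hconv continuous_snd
      fun N => integral_comp_snd_empMeasure N (σ N)⟩
end

section
/- Deterministic limit criterion for random measures: let K be a compact metric space and μ a random Borel probability measure on K. Let X, Y be two samples drawn independently from a single realization of μ, and let Z be a sample from an independent realization of μ. If the pair (X,Y) has the same joint distribution (as a K²-valued random variable) as (X,Z), then μ is almost surely deterministic: there exists ν ∈ M(K) with μ = ν almost surely. -/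
/-!
Write `ν = P.bind μ` for the mean measure. Evaluating the hypothesis on `A ×ˢ A` gives
`E[μ(A)²] = ν(A)² = E[μ(A)]²`, so the real random variable `μ(A)` has zero variance and
`μ(A) = ν(A)` almost surely, for every measurable `A`. Since the Borel σ-algebra of `K` is
countably generated, this upgrades to `μ = ν` almost surely: `P ⊗ₘ μ` and `P ⊗ₘ const ν` then
agree on rectangles, and a kernel is determined `P`-a.e. by its composition-product with `P`.
-/

open MeasureTheory

namespace ProbabilityTheory

variable {Ω K : Type*} {mΩ : MeasurableSpace Ω} {mK : MeasurableSpace K}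

lemma ae_eq_integral_of_integral_sq_eq_sq {P : Measure Ω} [IsProbabilityMeasure P] {X : Ω → ℝ}
    (hX : MemLp X 2 P) (h : P[X ^ 2] = P[X] ^ 2) : X =ᵐ[P] fun _ => P[X] := by
  rw [← evariance_eq_zero_iff hX.aestronglyMeasurable.aemeasurable, ← ofReal_variance hX,
    variance_eq_sub hX, h, sub_self, ENNReal.ofReal_zero]

namespace Kernel

variable {P : Measure Ω} {κ : Kernel Ω K}

lemma ae_apply_eq_comp_apply_of_comp_prod_eq [IsProbabilityMeasure P] [IsFiniteKernel κ]
    (h : (κ ×ₖ κ) ∘ₘ P = (κ ∘ₘ P).prod (κ ∘ₘ P)) {A : Set K} (hA : MeasurableSet A) :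
    ∀ᵐ ω ∂P, κ ω A = (κ ∘ₘ P) A := by
  have hmeas : Measurable fun ω => κ ω A := κ.measurable_coe hA
  have hfin : ∀ ω, κ ω A ≠ ⊤ := fun ω => measure_ne_top _ _
  have hmean : ∫⁻ ω, κ ω A ∂P = (κ ∘ₘ P) A := (Measure.bind_apply hA κ.aemeasurable).symm
  have hsq : ∫⁻ ω, κ ω A ^ 2 ∂P = (κ ∘ₘ P) A ^ 2 := calc
    _ = ((κ ×ₖ κ) ∘ₘ P) (A ×ˢ A) := by
      simp [Measure.bind_apply (hA.prod hA) (κ ×ₖ κ).aemeasurable, Kernel.prod_apply,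
        Measure.prod_prod, sq]
    _ = _ := by rw [h, Measure.prod_prod, sq]
  set X := fun ω => (κ ω A).toReal
  have hX : MemLp X 2 P := by
    refine MemLp.of_bound hmeas.ennreal_toReal.aestronglyMeasurable κ.bound.toReal
      (ae_of_all _ fun ω => ?_)
    rw [Real.norm_of_nonneg ENNReal.toReal_nonneg]
    exact ENNReal.toReal_mono κ.bound_ne_top (κ.measure_le_bound ω A)
  have hXmean : P[X] = ((κ ∘ₘ P) A).toReal := by
    rw [integral_toReal hmeas.aemeasurable (ae_of_all _ fun ω => (hfin ω).lt_top), hmean]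
  have hXsq : P[X ^ 2] = P[X] ^ 2 := by
    simp only [X, Pi.pow_apply, ← ENNReal.toReal_pow]
    rw [integral_toReal (hmeas.pow_const 2).aemeasurable
      (ae_of_all _ fun ω => ENNReal.pow_lt_top (hfin ω).lt_top), hsq, hXmean,
      ENNReal.toReal_pow]
  filter_upwards [ae_eq_integral_of_integral_sq_eq_sq hX hXsq] with ω hω
  rwa [hXmean, ENNReal.toReal_eq_toReal_iff' (hfin ω) (measure_ne_top _ _)] at hω

lemma ae_eq_of_forall_ae_apply_eq [MeasurableSpace.CountablyGenerated K] [IsFiniteMeasure P]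
    [IsFiniteKernel κ] {ν : Measure K} [IsFiniteMeasure ν]
    (h : ∀ A, MeasurableSet A → ∀ᵐ ω ∂P, κ ω A = ν A) : ∀ᵐ ω ∂P, κ ω = ν := by
  have hcompProd : P ⊗ₘ κ = P ⊗ₘ Kernel.const Ω ν := by
    rw [Measure.compProd_const]
    refine (Measure.prod_eq fun s A hs hA => ?_).symm
    rw [Measure.compProd_apply_prod hs hA, setLIntegral_congr_fun_ae hs
      ((h A hA).mono fun ω hω _ => hω), MeasureTheory.setLIntegral_const, mul_comm]
  exact Kernel.ae_eq_of_compProd_eq hcompProd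

lemma ae_eq_comp_of_comp_prod_eq [MeasurableSpace.CountablyGenerated K] [IsProbabilityMeasure P]
    [IsFiniteKernel κ] (h : (κ ×ₖ κ) ∘ₘ P = (κ ∘ₘ P).prod (κ ∘ₘ P)) :
    ∀ᵐ ω ∂P, κ ω = κ ∘ₘ P :=
  ae_eq_of_forall_ae_apply_eq fun _ hA => ae_apply_eq_comp_apply_of_comp_prod_eq h hA

end Kernel

end ProbabilityTheory

open ProbabilityTheory

/-- `P.bind (fun ω => (μ ω).prod (μ ω))` is the joint law of `(X, Y)` and
`(P.bind μ).prod (P.bind μ)` that of `(X, Z)`. -/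
theorem random_measure_deterministic
    {Ω : Type*} [MeasurableSpace Ω] (P : Measure Ω) [IsProbabilityMeasure P]
    {K : Type*} [MetricSpace K] [CompactSpace K] [MeasurableSpace K] [BorelSpace K]
    (μ : Ω → Measure K) (hmeas : Measurable μ)
    (hprob : ∀ ω, IsProbabilityMeasure (μ ω))
    (h : P.bind (fun ω => (μ ω).prod (μ ω)) = (P.bind μ).prod (P.bind μ)) :
    ∃ ν : Measure K, ∀ᵐ ω ∂P, μ ω = ν := by
  let κ : Kernel Ω K := ⟨μ, hmeas⟩
  have : IsMarkovKernel κ := ⟨hprob⟩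
  have hκ : (κ ×ₖ κ) ∘ₘ P = (κ ∘ₘ P).prod (κ ∘ₘ P) := by
    rw [show ⇑(κ ×ₖ κ) = fun ω => (μ ω).prod (μ ω) from funext (κ.prod_apply κ)]
    exact h
  exact ⟨P.bind μ, Kernel.ae_eq_comp_of_comp_prod_eq hκ⟩
end
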